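/- arXiv:1910.10629 — 2 statements merged into one kernel-verified Lean document; each statement's English description precedes it below -/
import Mathlib

section
/- Let κ be a regular uncountable cardinal and let ⟨C_α : α < κ⟩ be a C-sequence (C_α club in α for limit α, C_{α+1} = {α}), with associated function ρ₂. Suppose α < β < κ, α is a limit ordinal, and ρ₂(α,β) > n. Then there is η < α such that ρ₂(ξ,β) > n for all ξ with η < ξ < α. -/
open Set Filter Topology

universe u v

noncomputable section

/-- The Gδ-modification of a topology: the topology generated by the Gδ subsets. -/
def gdeltaMod {X : Type*} (t : TopologicalSpace X) : TopologicalSpace X :=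
  TopologicalSpace.generateFrom {s : Set X | @IsGδ X t s}

/-- `x` is a Fréchet point: whenever `x ∈ cl A` there is a sequence in `A` converging to `x`. -/
def IsFrechetPt {X : Type*} (t : TopologicalSpace X) (x : X) : Prop :=
  ∀ A : Set X, x ∈ @closure X t A →
    ∃ u : ℕ → X, (∀ n, u n ∈ A) ∧ @Filter.Tendsto ℕ X u Filter.atTop (@nhds X t x)

/-- `x` is an α₁-point: given countably many sequences converging to `x`, there is a single
sequence converging to `x` whose range contains the range of each given one modulo finite. -/
def IsAlpha1Pt {X : Type*} (t : TopologicalSpace X) (x : X) : Prop :=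
  ∀ u : ℕ → ℕ → X, (∀ n, @Filter.Tendsto ℕ X (u n) Filter.atTop (@nhds X t x)) →
    ∃ v : ℕ → X, @Filter.Tendsto ℕ X v Filter.atTop (@nhds X t x) ∧
      ∀ n, (Set.range (u n) \ Set.range v).Finite

/-- A set `B` converges to `x`: every neighborhood of `x` contains all but finitely
many elements of `B`. -/
def SetConverges {X : Type*} (t : TopologicalSpace X) (B : Set X) (x : X) : Prop :=
  ∀ U ∈ @nhds X t x, (B \ U).Finite

/-- Tightness of the space is at most κ. -/
def tightnessLe (X : Type u) (t : TopologicalSpace X) (κ : Cardinal.{u}) : Prop :=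
  ∀ (x : X) (A : Set X), x ∈ @closure X t A →
    ∃ B : Set X, B ⊆ A ∧ Cardinal.mk ↥B ≤ κ ∧ x ∈ @closure X t B

/-- The tightness `t(X)`: the least infinite cardinal κ such that whenever `x ∈ cl A`
there is `B ⊆ A` with `|B| ≤ κ` and `x ∈ cl B`. -/
def tightness (X : Type u) (t : TopologicalSpace X) : Cardinal.{u} :=
  sInf {κ : Cardinal.{u} | Cardinal.aleph0 ≤ κ ∧ tightnessLe X t κ}

/-- The tightness `t(x, X)` of a point. -/
def tightnessPt {X : Type u} (t : TopologicalSpace X) (x : X) : Cardinal.{u} :=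
  sInf {κ : Cardinal.{u} | Cardinal.aleph0 ≤ κ ∧
    ∀ A : Set X, x ∈ @closure X t A →
      ∃ B : Set X, B ⊆ A ∧ Cardinal.mk ↥B ≤ κ ∧ x ∈ @closure X t B}
/-- `β` is a limit (accumulation) point of the set of ordinals `C`. -/
def IsAccPoint (β : Ordinal.{u}) (C : Set Ordinal.{u}) : Prop :=
  β ≠ 0 ∧ ∀ γ < β, ∃ δ ∈ C, γ < δ ∧ δ < β

/-- `C` is club in `α`: a subset of `α`, closed under limit points below `α`,
and unbounded in `α`. -/
def IsClubIn (C : Set Ordinal.{u}) (α : Ordinal.{u}) : Prop :=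
  C ⊆ Set.Iio α ∧ (∀ β < α, IsAccPoint β C → β ∈ C) ∧ ∀ γ < α, ∃ δ ∈ C, γ < δ

/-- A coherent C-sequence on `o`. -/
def IsCoherentCSeq (o : Ordinal.{u}) (C : Ordinal.{u} → Set Ordinal.{u}) : Prop :=
  (∀ α < o, Order.IsSuccLimit α → IsClubIn (C α) α) ∧
  (∀ α : Ordinal.{u}, α + 1 < o → C (α + 1) = {α}) ∧
  (∀ α < o, ∀ β : Ordinal.{u}, IsAccPoint β (C α) → C α ∩ Set.Iio β = C β)

/-- A `□(o)`-sequence: a coherent C-sequence on `o` with no thread. -/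
def IsSquareSeq (o : Ordinal.{u}) (C : Ordinal.{u} → Set Ordinal.{u}) : Prop :=
  IsCoherentCSeq o C ∧
  ¬ ∃ D : Set Ordinal.{u}, IsClubIn D o ∧
      ∀ β : Ordinal.{u}, IsAccPoint β D → D ∩ Set.Iio β = C β

/-- The basic neighborhood of the top point of `o + 1` determined by an assignment
`n` of natural numbers to (limit) ordinals: `{o} ∪ ⋃ {ξ < α : ρ(ξ,α) > n α}`. -/
def sqBase (o : Ordinal.{u}) (ρ : Ordinal.{u} → Ordinal.{u} → ℕ) (n : Ordinal.{u} → ℕ) :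
    Set {β : Ordinal.{u} // β ≤ o} :=
  {x | x.1 = o ∨ ∃ α : Ordinal.{u}, α < o ∧ Order.IsSuccLimit α ∧ x.1 < α ∧ n α < ρ x.1 α}

/-- The topology `X_ρ` on `o + 1` (as the subtype of ordinals `≤ o`): every point below `o`
is isolated and the neighborhoods of the top point are generated by the sets `sqBase o ρ n`. -/
def sqTop (o : Ordinal.{u}) (ρ : Ordinal.{u} → Ordinal.{u} → ℕ) :
    TopologicalSpace {β : Ordinal.{u} // β ≤ o} :=
  nhdsAdjoint ⟨o, le_rfl⟩
    (⨅ n : Ordinal.{u} → ℕ, Filter.principal (sqBase o ρ n))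

lemma sInf_step_aux {κ : Cardinal.{u}} (C : Ordinal.{u} → Set Ordinal.{u})
    (hclub : ∀ α < κ.ord, Order.IsSuccLimit α → IsClubIn (C α) α)
    (hsucc : ∀ α : Ordinal.{u}, α + 1 < κ.ord → C (α + 1) = {α})
    (α β : Ordinal.{u}) (hαβ : α < β) (hβ : β < κ.ord) :
    sInf (C β ∩ Set.Ici α) ∈ C β ∩ Set.Ici α ∧ sInf (C β ∩ Set.Ici α) < β := by
  rcases Ordinal.zero_or_succ_or_isSuccLimit β with h0 | ⟨γ, rfl⟩ | hlim
  · exact absurd h0 (pos_iff_ne_zero.mp (lt_of_le_of_lt (zero_le (a := α)) hαβ))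
  · rw [← Ordinal.add_one_eq_succ] at *
    have hαγ : α ≤ γ := Order.lt_succ_iff.mp (by rwa [Ordinal.add_one_eq_succ] at hαβ)
    have : C (γ + 1) ∩ Set.Ici α = {γ} := by
      rw [hsucc γ hβ]
      exact Set.inter_eq_self_of_subset_left (by simpa using hαγ)
    rw [this, csInf_singleton]
    exact ⟨rfl, lt_add_one γ⟩
  · obtain ⟨hsub, _, hub⟩ := hclub β hβ hlim
    obtain ⟨δ, hδC, hδα⟩ := hub α hαβ
    have hne : (C β ∩ Set.Ici α).Nonempty := ⟨δ, hδC, le_of_lt hδα⟩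
    have hmem := csInf_mem hne
    exact ⟨hmem, hsub hmem.1⟩

/-- for a C-sequence on a regular uncountable `κ` with associated `ρ₂`, if
`α < β < κ`, `α` is a limit ordinal and `ρ₂(α, β) > n`, then there is `η < α` with
`ρ₂(ξ, β) > n` for all `ξ` with `η < ξ < α`. -/
theorem statement17 (κ : Cardinal.{u}) (hreg : κ.IsRegular) (hunc : Cardinal.aleph0 < κ)
    (C : Ordinal.{u} → Set Ordinal.{u})
    (hclub : ∀ α < κ.ord, Order.IsSuccLimit α → IsClubIn (C α) α)
    (hsucc : ∀ α : Ordinal.{u}, α + 1 < κ.ord → C (α + 1) = {α})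
    (ρ : Ordinal.{u} → Ordinal.{u} → ℕ)
    (hρ0 : ∀ α : Ordinal.{u}, ρ α α = 0)
    (hρs : ∀ α β : Ordinal.{u}, α < β → β < κ.ord →
      ρ α β = ρ α (sInf (C β ∩ Set.Ici α)) + 1)
    (α β : Ordinal.{u}) (hαβ : α < β) (hβ : β < κ.ord)
    (hα : Order.IsSuccLimit α) (n : ℕ) (hn : n < ρ α β) :
    ∃ η < α, ∀ ξ : Ordinal.{u}, η < ξ → ξ < α → n < ρ ξ β := by
  have hα0 : (0 : Ordinal.{u}) < α := pos_iff_ne_zero.mpr (Ordinal.isSuccLimit_iff.mp hα).1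
  induction n generalizing β with
  | zero =>
    refine ⟨0, hα0, fun ξ hξ0 hξα => ?_⟩
    rw [hρs ξ β (hξα.trans hαβ) hβ]
    exact Nat.succ_pos _
  | succ n ih =>
    set β₁ := sInf (C β ∩ Set.Ici α) with hβ₁def
    obtain ⟨⟨hβ₁C, hβ₁α⟩, hβ₁β⟩ := sInf_step_aux C hclub hsucc α β hαβ hβ
    have hwalk : ρ α β = ρ α β₁ + 1 := hρs α β hαβ hβ
    have hnρ : n < ρ α β₁ := by omega
    rcases eq_or_lt_of_le (Set.mem_Ici.mp hβ₁α) with heq | hαβ₁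
    · -- β₁ = α : then ρ α β = 1, contradiction with n+1 < ρ α β
      rw [← hβ₁def] at heq
      rw [← heq, hρ0] at hwalk
      omega
    · -- α < β₁
      -- C β ∩ Iio α is bounded below α
      have hbdd : ∃ η₀ < α, ∀ δ ∈ C β, δ < α → δ ≤ η₀ := by
        by_contra hcon
        push_neg at hcon
        have hacc : IsAccPoint α (C β) := by
          refine ⟨(Ordinal.isSuccLimit_iff.mp hα).1, fun γ hγ => ?_⟩
          obtain ⟨δ, hδC, hδα, hγδ⟩ := hcon γ hγ
          exact ⟨δ, hδC, hγδ, hδα⟩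
        rcases Ordinal.zero_or_succ_or_isSuccLimit β with h0 | ⟨γ, rfl⟩ | hlim
        · exact absurd h0 (pos_iff_ne_zero.mp (lt_of_le_of_lt (zero_le (a := α)) hαβ))
        · rw [← Ordinal.add_one_eq_succ] at *
          rw [hsucc γ hβ] at hacc
          obtain ⟨δ, hδ, _, hδα⟩ := hacc.2 0 hα0
          rw [Set.mem_singleton_iff] at hδ
          subst hδ
          exact absurd hδα (not_lt.mpr (Order.lt_succ_iff.mp
            (by rwa [Ordinal.add_one_eq_succ] at hαβ)))
        · have hαC : α ∈ C β := (hclub β hβ hlim).2.1 α hαβ hacc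
          have : α ∈ C β ∩ Set.Ici α := ⟨hαC, le_refl α⟩
          exact absurd (csInf_le' this) (not_le.mpr hαβ₁)
      obtain ⟨η₀, hη₀α, hη₀⟩ := hbdd
      obtain ⟨η₁, hη₁α, hη₁⟩ := ih β₁ hαβ₁ (hβ₁β.trans hβ) hnρ
      refine ⟨max η₀ η₁, max_lt hη₀α hη₁α, fun ξ hξmax hξα => ?_⟩
      have hξη₀ : η₀ < ξ := lt_of_le_of_lt (le_max_left _ _) hξmax
      have hξη₁ : η₁ < ξ := lt_of_le_of_lt (le_max_right _ _) hξmax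
      have hsInf_eq : sInf (C β ∩ Set.Ici ξ) = β₁ := by
        have hβ₁mem : β₁ ∈ C β ∩ Set.Ici ξ := ⟨hβ₁C, le_of_lt (hξα.trans hαβ₁)⟩
        refine le_antisymm (csInf_le' hβ₁mem) ?_
        have hmem := csInf_mem ⟨β₁, hβ₁mem⟩
        rcases lt_or_ge (sInf (C β ∩ Set.Ici ξ)) α with hlt | hge
        · exact absurd (hη₀ _ hmem.1 hlt) (not_le.mpr (lt_of_lt_of_le hξη₀ hmem.2))
        · exact csInf_le' ⟨hmem.1, hge⟩
      rw [hρs ξ β (hξα.trans hαβ) hβ, hsInf_eq]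
      have := hη₁ ξ hξη₁ hξα
      omega
end
end

section
/- Let S(ω) denote the sequential fan: the quotient of ω × (ω+1), where ω carries the discrete topology and ω+1 the order topology, obtained by collapsing the set ω × {ω} to a single point ∞. Suppose a Tychonoff space X contains a topological embedding e : S(ω) → X. Then for every compactification cX of X (a compact Hausdorff space in which X embeds as a dense subspace), the point corresponding to e(∞) does not have countable tightness in cX, i.e., t(e(∞), cX) > ω. -/
open Set Filter Topology

universe u v

noncomputable section

/-- The setoid on `ω × (ω+1)` identifying all points of `ω × {ω}`. -/
def fanSetoid : Setoid (ℕ × ℕ∞) where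
  r a b := a = b ∨ (a.2 = ⊤ ∧ b.2 = ⊤)
  iseqv := by
    refine ⟨fun _ => Or.inl rfl, ?_, ?_⟩
    · rintro a b (rfl | ⟨h1, h2⟩)
      · exact Or.inl rfl
      · exact Or.inr ⟨h2, h1⟩
    · rintro a b c (rfl | ⟨h1, h2⟩) h
      · exact h
      · rcases h with rfl | ⟨h3, h4⟩
        · exact Or.inr ⟨h1, h2⟩
        · exact Or.inr ⟨h1, h4⟩

/-- The sequential fan `S(ω)`: the quotient of `ω × (ω+1)` (with `ω` discrete and `ω+1`
carrying the order topology) collapsing `ω × {ω}` to a single point. -/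
def SeqFan : Type :=
  Quotient fanSetoid

instance : TopologicalSpace SeqFan :=
  instTopologicalSpaceQuotient

/-- The point `∞` of the sequential fan. -/
def fanInfty : SeqFan :=
  Quotient.mk fanSetoid (0, ⊤)

section Statement19Aux

open Set Filter Topology

/-- quotient map to the fan -/
abbrev fanMk : ℕ × ℕ∞ → SeqFan := Quotient.mk fanSetoid

/-- the finite points of the fan, indexed by ℕ × ℕ -/
abbrev fanPt (q : ℕ × ℕ) : SeqFan := fanMk (q.1, (q.2 : ℕ∞))

lemma fanMk_eq_iff {a b : ℕ × ℕ∞} :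
    fanMk a = fanMk b ↔ (a = b ∨ (a.2 = ⊤ ∧ b.2 = ⊤)) :=
  ⟨fun h => Quotient.exact h, fun h => Quotient.sound h⟩

lemma fanMk_top (n : ℕ) : fanMk (n, ⊤) = fanInfty :=
  Quotient.sound (Or.inr ⟨rfl, rfl⟩)

lemma fanPt_injective : Function.Injective fanPt := by
  rintro ⟨n, m⟩ ⟨n', m'⟩ h
  rcases fanMk_eq_iff.1 h with h | ⟨h1, h2⟩
  · have h1 : n = n' := congrArg Prod.fst h
    have h2 : (m : ℕ∞) = (m' : ℕ∞) := congrArg Prod.snd h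
    exact Prod.ext h1 (by exact_mod_cast h2)
  · exact absurd h1 (ENat.coe_ne_top m)

lemma fanPt_ne_infty (q : ℕ × ℕ) : fanPt q ≠ fanInfty := by
  intro h
  rw [← fanMk_top 0] at h
  rcases fanMk_eq_iff.1 h with h | ⟨h1, _⟩
  · exact ENat.coe_ne_top q.2 (congrArg Prod.snd h)
  · exact ENat.coe_ne_top q.2 h1

lemma isOpen_fan_of_preimage {U : Set SeqFan} (h : IsOpen (fanMk ⁻¹' U)) : IsOpen U :=
  isOpen_coinduced.mpr h

/-- singletons at finite points are open in the fan -/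
lemma fan_isOpen_singleton (q : ℕ × ℕ) : IsOpen ({fanPt q} : Set SeqFan) := by
  apply isOpen_fan_of_preimage
  have he : fanMk ⁻¹' {fanPt q} = {q.1} ×ˢ {((q.2 : ℕ∞))} := by
    ext ⟨a, b⟩
    simp only [mem_preimage, mem_singleton_iff, mem_prod]
    constructor
    · intro h
      rcases fanMk_eq_iff.1 h with h | ⟨h1, h2⟩
      · exact ⟨congrArg Prod.fst h, congrArg Prod.snd h⟩
      · exact absurd h2 (ENat.coe_ne_top q.2)
    · rintro ⟨rfl, rfl⟩; rfl
  rw [he]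
  exact IsOpen.prod (isOpen_discrete _) (ENat.isOpen_singleton (ENat.coe_ne_top q.2))

/-- `∞` is not in the fan-closure of a set meeting each branch in a bounded set. -/
lemma fanInfty_notMem_closure_lower (g : ℕ → ℕ) :
    fanInfty ∉ closure (fanPt '' {q | q.2 ≤ g q.1}) := by
  intro hmem
  set S : Set (ℕ × ℕ∞) := {q | ((g q.1 : ℕ∞)) < q.2} with hS
  have hSopen : IsOpen S :=
    isOpen_lt (((continuous_of_discreteTopology :
      Continuous fun n : ℕ => ((g n : ℕ∞)))).comp continuous_fst) continuous_snd
  have hsat : fanMk ⁻¹' (fanMk '' S) = S := by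
    ext ⟨a, b⟩
    simp only [mem_preimage, mem_image]
    constructor
    · rintro ⟨⟨c, d⟩, hcd, h⟩
      rcases fanMk_eq_iff.1 h with h | ⟨h1, h2⟩
      · cases h; exact hcd
      · have hb : b = ⊤ := h2
        show ((g a : ℕ∞)) < b
        rw [hb]
        exact lt_top_iff_ne_top.mpr (ENat.coe_ne_top _)
    · intro h; exact ⟨(a, b), h, rfl⟩
  have hU : IsOpen (fanMk '' S) := by
    apply isOpen_fan_of_preimage; rw [hsat]; exact hSopen
  have hinf : fanInfty ∈ fanMk '' S :=
    ⟨(0, ⊤), by simp [hS, lt_top_iff_ne_top, ENat.coe_ne_top], rfl⟩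
  rcases mem_closure_iff.1 hmem (fanMk '' S) hU hinf with ⟨z, hz1, hz2⟩
  rcases hz2 with ⟨q, hq, rfl⟩
  rcases hz1 with ⟨⟨a, b⟩, hab, habz⟩
  rcases fanMk_eq_iff.1 habz with h | ⟨h1, h2⟩
  · have hfst : a = q.1 := congrArg Prod.fst h
    have hsnd : b = (q.2 : ℕ∞) := congrArg Prod.snd h
    have hlt : ((g q.1 : ℕ∞)) < (q.2 : ℕ∞) := by
      have h' := hab
      rw [hS] at h'
      simpa [hfst, hsnd] using h'
    have hlt' : g q.1 < q.2 := by exact_mod_cast hlt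
    exact absurd hlt' (not_lt.mpr hq)
  · exact ENat.coe_ne_top q.2 h2

/-- each branch converges to `∞` in the fan -/
lemma fan_branch_tendsto (n : ℕ) :
    Tendsto (fun m : ℕ => fanPt (n, m)) atTop (𝓝 fanInfty) := by
  have hcast : Tendsto (fun m : ℕ => (m : ℕ∞)) atTop (𝓝 ⊤) := by
    rw [ENat.tendsto_nhds_top_iff_natCast_lt]
    intro k
    filter_upwards [eventually_gt_atTop k] with m hm
    exact_mod_cast hm
  have hpair : Tendsto (fun m : ℕ => ((n, (m : ℕ∞)) : ℕ × ℕ∞)) atTop (𝓝 (n, ⊤)) := by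
    rw [nhds_prod_eq]
    exact Tendsto.prodMk tendsto_const_nhds hcast
  have hcont : Continuous fanMk := continuous_quotient_mk'
  have := (hcont.tendsto (n, ⊤)).comp hpair
  rwa [fanMk_top] at this

end Statement19Aux

/-- if a Tychonoff space `X` contains an embedded copy of the sequential fan
`S(ω)`, then in every compactification of `X` the point corresponding to the base point `∞`
of the fan does not have countable tightness. -/
theorem statement19 (X : Type u) [TopologicalSpace X] [T35Space X]
    (e : SeqFan → X) (he : Topology.IsEmbedding e)
    (Y : Type v) (tY : TopologicalSpace Y)
    (hcomp : @CompactSpace Y tY) (hT2 : @T2Space Y tY)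
    (i : X → Y) (hi : @Topology.IsEmbedding X Y _ tY i) (hd : @DenseRange Y tY X i) :
    Cardinal.aleph0 < tightnessPt tY (i (e fanInfty)) := by
  letI := tY
  haveI := hcomp
  haveI := hT2
  -- the composed embedding of the fan into Y
  have hφ : Topology.IsEmbedding (i ∘ e) := hi.comp he
  set φ : SeqFan → Y := i ∘ e with hφdef
  set p : Y := φ fanInfty with hpdef
  set x : ℕ × ℕ → Y := fun q => φ (fanPt q) with hxdef
  have hxinj : Function.Injective x := fun a b h => fanPt_injective (hφ.injective h)
  set D : Set Y := Set.range x with hDdef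
  have hpD : p ∉ D := by
    rintro ⟨q, hq⟩
    exact fanPt_ne_infty q (hφ.injective hq)
  -- transfer of closures through the embedding
  have hclos : ∀ C : Set SeqFan, fanInfty ∈ closure C ↔ p ∈ closure (φ '' C) := by
    intro C
    rw [hφ.closure_eq_preimage_closure_image C]
    exact Iff.rfl
  -- p is not in the closure of any "lower set"
  have hLg : ∀ g : ℕ → ℕ, p ∉ closure (x '' {q : ℕ × ℕ | q.2 ≤ g q.1}) := by
    intro g hg
    apply fanInfty_notMem_closure_lower g
    rw [hclos, Set.image_image]
    exact hg
  -- each branch converges to p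
  have hx : ∀ n : ℕ, Tendsto (fun m : ℕ => x (n, m)) atTop (𝓝 p) := fun n =>
    (hφ.continuous.tendsto fanInfty).comp (fan_branch_tendsto n)
  -- points of D are isolated within D
  have hiso : ∀ q : ℕ × ℕ, ∃ W : Set Y, IsOpen W ∧ x q ∈ W ∧ ∀ q', x q' ∈ W → q' = q := by
    intro q
    have h1 : IsOpen ({fanPt q} : Set SeqFan) := fan_isOpen_singleton q
    rw [hφ.toIsInducing.eq_induced, isOpen_induced_iff] at h1
    rcases h1 with ⟨W, hWo, hWpre⟩
    refine ⟨W, hWo, ?_, ?_⟩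
    · have : fanPt q ∈ φ ⁻¹' W := by rw [hWpre]; rfl
      exact this
    · intro q' hq'
      have : fanPt q' ∈ φ ⁻¹' W := hq'
      rw [hWpre] at this
      exact fanPt_injective this
  -- compact subsets of D are finite
  have hDfin : ∀ C : Set Y, IsCompact C → C ⊆ D → C.Finite := by
    intro C hC hCD
    choose W hWo hWx hWu using hiso
    have hcover : C ⊆ ⋃ q : ℕ × ℕ, W q := by
      intro y hy
      rcases hCD hy with ⟨q, rfl⟩
      exact Set.mem_iUnion.2 ⟨q, hWx q⟩
    rcases hC.elim_finite_subcover W hWo hcover with ⟨t, ht⟩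
    apply Set.Finite.subset (t.finite_toSet.image x)
    intro y hy
    rcases hCD hy with ⟨q, rfl⟩
    rcases Set.mem_iUnion₂.1 (ht hy) with ⟨q', hq't, hq'W⟩
    have hqq : q = q' := hWu q' q hq'W
    exact ⟨q', hq't, by rw [hqq]⟩
  -- the crucial set A
  set A : Set Y :=
    {y | y ∉ D ∧ ∃ g : ℕ → ℕ, y ∈ closure (x '' {q : ℕ × ℕ | q.2 ≤ g q.1})} with hAdef
  -- p is in the closure of A
  have hpA : p ∈ closure A := by
    rw [mem_closure_iff]
    intro U hUo hpU
    obtain ⟨V, ⟨hV𝓝, hVcl⟩, hVU⟩ := (closed_nhds_basis p).mem_iff.1 (hUo.mem_nhds hpU)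
    have hfe : ∀ n : ℕ, ∃ m : ℕ, x (n, m) ∈ V := fun n =>
      Filter.Eventually.exists ((hx n) hV𝓝 : ∀ᶠ m in atTop, x (n, m) ∈ V)
    choose f hf using hfe
    set L : Set Y := x '' {q : ℕ × ℕ | q.2 ≤ f q.1} with hLdef
    have hCcl : IsClosed (closure L ∩ V) := isClosed_closure.inter hVcl
    have hCcomp : IsCompact (closure L ∩ V) := hCcl.isCompact
    have hsub : Set.range (fun n : ℕ => x (n, f n)) ⊆ closure L ∩ V := by
      rintro y ⟨n, rfl⟩
      exact ⟨subset_closure ⟨(n, f n), by simp, rfl⟩, hf n⟩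
    have hinf : (closure L ∩ V).Infinite := by
      apply Set.Infinite.mono hsub
      apply Set.infinite_range_of_injective
      intro a b hab
      have := hxinj hab
      exact (Prod.mk.injEq .. ▸ this).1
    have : ¬ (closure L ∩ V ⊆ D) := fun hsubD => hinf (hDfin _ hCcomp hsubD)
    rcases Set.not_subset.1 this with ⟨y, ⟨hyL, hyV⟩, hyD⟩
    exact ⟨y, hVU hyV, hyD, f, hyL⟩
  -- no countable subset of A has p in its closure
  have hcount : ∀ B : Set Y, B ⊆ A → Cardinal.mk B ≤ Cardinal.aleph0 → p ∉ closure B := by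
    intro B hBA hBcard hpB
    have hBc : B.Countable := by
      rwa [Cardinal.mk_le_aleph0_iff, Set.countable_coe_iff] at hBcard
    have hBne : B.Nonempty := by
      rcases Set.eq_empty_or_nonempty B with rfl | h
      · simp at hpB
      · exact h
    obtain ⟨b, hBeq⟩ := hBc.exists_eq_range hBne
    have hbk : ∀ k, b k ∈ A := fun k => hBA (hBeq ▸ Set.mem_range_self k)
    have hbD : ∀ k, b k ∉ D := fun k => (hbk k).1
    choose g hbg using fun k => (hbk k).2
    set G : ℕ → ℕ := fun n => (Finset.range (n + 1)).sup (fun k => g k n) with hGdef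
    have hkey : ∀ k, b k ∈ closure (x '' {q : ℕ × ℕ | q.2 ≤ G q.1}) := by
      intro k
      obtain ⟨N, hN⟩ : ∃ N : ℕ, ∀ n, n < k → g k n < N :=
        ⟨(Finset.range k).sup (g k) + 1, fun n hn =>
          Nat.lt_succ_of_le (Finset.le_sup (f := g k) (Finset.mem_range.2 hn))⟩
      set F : Set Y := x '' ((Finset.range k ×ˢ Finset.range N : Finset (ℕ × ℕ)) : Set (ℕ × ℕ))
        with hFdef
      have hFfin : F.Finite := Set.Finite.image x (Finset.finite_toSet _)
      have hFD : F ⊆ D := Set.image_subset_range x _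
      have hsplit : x '' {q : ℕ × ℕ | q.2 ≤ g k q.1} ⊆
          (x '' {q : ℕ × ℕ | q.2 ≤ G q.1}) ∪ F := by
        rintro y ⟨q, hq, rfl⟩
        have hq' : q.2 ≤ g k q.1 := hq
        by_cases hk : k ≤ q.1
        · left
          refine ⟨q, ?_, rfl⟩
          calc q.2 ≤ g k q.1 := hq'
            _ ≤ G q.1 := Finset.le_sup (f := fun j => g j q.1)
                (Finset.mem_range.2 (Nat.lt_succ_of_le hk))
        · right
          refine ⟨q, ?_, rfl⟩
          simp only [Finset.coe_product, Set.mem_prod, Finset.mem_coe, Finset.mem_range]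
          exact ⟨Nat.lt_of_not_le hk, lt_of_le_of_lt hq' (hN q.1 (Nat.lt_of_not_le hk))⟩
      have hclsub : closure (x '' {q : ℕ × ℕ | q.2 ≤ g k q.1}) ⊆
          closure (x '' {q : ℕ × ℕ | q.2 ≤ G q.1}) ∪ F := by
        have hcl : closure ((x '' {q : ℕ × ℕ | q.2 ≤ G q.1}) ∪ F) =
            closure (x '' {q : ℕ × ℕ | q.2 ≤ G q.1}) ∪ F := by
          rw [closure_union, hFfin.isClosed.closure_eq]
        rw [← hcl]
        exact closure_mono hsplit
      rcases hclsub (hbg k) with h | h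
      · exact h
      · exact absurd (hFD h) (hbD k)
    have hBsub : B ⊆ closure (x '' {q : ℕ × ℕ | q.2 ≤ G q.1}) := by
      rw [hBeq]
      rintro y ⟨k, rfl⟩
      exact hkey k
    exact hLg G (closure_minimal hBsub isClosed_closure hpB)
  -- conclude about tightnessPt
  show Cardinal.aleph0 < tightnessPt tY p
  unfold tightnessPt
  set S : Set Cardinal.{v} := {κ : Cardinal.{v} | Cardinal.aleph0 ≤ κ ∧
    ∀ A : Set Y, p ∈ closure A →
      ∃ B : Set Y, B ⊆ A ∧ Cardinal.mk ↥B ≤ κ ∧ p ∈ closure B} with hSdef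
  have hSne : S.Nonempty := by
    refine ⟨max Cardinal.aleph0 (Cardinal.mk Y), le_max_left _ _, fun A' hA' => ?_⟩
    exact ⟨A', subset_rfl, le_trans (Cardinal.mk_set_le A') (le_max_right _ _), hA'⟩
  have hmem := csInf_mem hSne
  have hne : sInf S ≠ Cardinal.aleph0 := by
    intro h
    have hS : Cardinal.aleph0 ∈ S := h ▸ hmem
    rcases hS.2 A hpA with ⟨B, hBA, hBcard, hpB⟩
    exact hcount B hBA hBcard hpB
  exact lt_of_le_of_ne hmem.1 (Ne.symm hne)
end
end
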